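/- arXiv:2405.18235 — 4 statements merged into one kernel-verified Lean document; each statement's English description precedes it below -/
import Mathlib

section
/- Let T be a positive semidefinite bounded operator on a Hilbert space H, and let K be a closed subspace of H with orthogonal projection P_K (and P_{K⊥} the projection onto its orthogonal complement). Set γ₁ = ‖P_K T P_K‖ and γ₂ = ‖P_{K⊥} T P_{K⊥}‖. Then for every v ∈ H, |⟨(T - P_K T P_K - P_{K⊥} T P_{K⊥}) v, v⟩| ≤ √(γ₁γ₂) ‖v‖², i.e. -√(γ₁γ₂)·I ≤ T - (P_K T P_K + P_{K⊥} T P_{K⊥}) ≤ √(γ₁γ₂)·I. -/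
open RCLike ContinuousLinearMap

/-- Cauchy–Schwarz for a positive operator: `‖⟪T x, y⟫‖ ^ 2 ≤ re ⟪T x, x⟫ * re ⟪T y, y⟫`. -/
private lemma posCS {H : Type*} [NormedAddCommGroup H] [InnerProductSpace ℂ H] [CompleteSpace H]
    (T : H →L[ℂ] H) (hT : T.IsPositive) (x y : H) :
    ‖(inner ℂ (T x) y : ℂ)‖ ^ 2 ≤ re (inner ℂ (T x) x : ℂ) * re (inner ℂ (T y) y : ℂ) := by
  have hsym : (T : H →ₗ[ℂ] H).IsSymmetric :=
    ContinuousLinearMap.isSelfAdjoint_iff_isSymmetric.mp hT.isSelfAdjoint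
  have hsym' : ∀ a b : H, (inner ℂ (T a) b : ℂ) = inner ℂ a (T b) := fun a b => hsym a b
  let c : PreInnerProductSpace.Core ℂ H :=
    { inner := fun a b => (inner ℂ a (T b) : ℂ)
      conj_inner_symm := fun a b => by
        calc (starRingEnd ℂ) (inner ℂ b (T a) : ℂ) = inner ℂ (T a) b := inner_conj_symm _ _
        _ = inner ℂ a (T b) := hsym' a b
      re_inner_nonneg := fun a => by
        have := hT.re_inner_nonneg_right a
        simpa using this
      add_left := fun a b z => by simp [inner_add_left]
      smul_left := fun a b r => by simp [inner_smul_left, mul_comm] }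
  have h := @InnerProductSpace.Core.inner_mul_inner_self_le ℂ H _ _ _ c x y
  have e1 : (c.inner x y : ℂ) = inner ℂ (T x) y := (hsym' x y).symm
  have e2 : ‖(c.inner y x : ℂ)‖ = ‖(inner ℂ (T x) y : ℂ)‖ := by
    show ‖(inner ℂ y (T x) : ℂ)‖ = ‖(inner ℂ (T x) y : ℂ)‖
    exact (norm_inner_symm (T x) y).symm
  have e3 : re (c.inner x x : ℂ) = re (inner ℂ (T x) x : ℂ) := by
    show re (inner ℂ x (T x) : ℂ) = re (inner ℂ (T x) x : ℂ)
    rw [hsym' x x]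
  have e4 : re (c.inner y y : ℂ) = re (inner ℂ (T y) y : ℂ) := by
    show re (inner ℂ y (T y) : ℂ) = re (inner ℂ (T y) y : ℂ)
    rw [hsym' y y]
  rw [e1, e2, e3, e4] at h
  rw [pow_two]
  exact h

/-- Lemma 7.2 (bfa): pointwise form of
`-√(γ₁γ₂)·I ≤ T - (P_K T P_K + P_{K⊥} T P_{K⊥}) ≤ √(γ₁γ₂)·I`. -/
theorem stmt0 {H : Type*} [NormedAddCommGroup H] [InnerProductSpace ℂ H] [CompleteSpace H]
    (T : H →L[ℂ] H) (hT : T.IsPositive) (K : Submodule ℂ H) [CompleteSpace K]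
    (P P' : H →L[ℂ] H)
    (hP : P = K.subtypeL ∘L (K.orthogonalProjectionOnto))
    (hP' : P' = Kᗮ.subtypeL ∘L (Kᗮ.orthogonalProjectionOnto)) :
    ∀ v : H, ‖(inner ℂ ((T - (P ∘L T ∘L P + P' ∘L T ∘L P')) v) v : ℂ)‖ ≤
      Real.sqrt (‖P ∘L T ∘L P‖ * ‖P' ∘L T ∘L P'‖) * ‖v‖ ^ 2 := by
  intro v
  have hsym : (T : H →ₗ[ℂ] H).IsSymmetric :=
    ContinuousLinearMap.isSelfAdjoint_iff_isSymmetric.mp hT.isSelfAdjoint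
  have hsym' : ∀ a b : H, (inner ℂ (T a) b : ℂ) = inner ℂ a (T b) := fun a b => hsym a b
  set x : H := P v with hx
  set y : H := P' v with hy
  have hxK : x ∈ K := by rw [hx, hP]; exact (K.orthogonalProjectionOnto v).2
  have hyK : y ∈ Kᗮ := by rw [hy, hP']; exact (Kᗮ.orthogonalProjectionOnto v).2
  have hv : x + y = v := by
    rw [hx, hy, hP, hP']
    exact Submodule.starProjection_add_starProjection_orthogonal (K := K) v
  have hPinner : ∀ w u : H, (inner ℂ (P w) u : ℂ) = inner ℂ w (P u) := by
    intro w u; rw [hP]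
    exact Submodule.inner_starProjection_left_eq_right (K := K) w u
  have hP'inner : ∀ w u : H, (inner ℂ (P' w) u : ℂ) = inner ℂ w (P' u) := by
    intro w u; rw [hP']
    exact Submodule.inner_starProjection_left_eq_right (K := Kᗮ) w u
  have hPx : P x = x := by
    rw [hP]; exact (Submodule.starProjection_eq_self_iff (K := K)).mpr hxK
  have hP'y : P' y = y := by
    rw [hP']; exact (Submodule.starProjection_eq_self_iff (K := Kᗮ)).mpr hyK
  -- main algebraic identity
  have key : (inner ℂ ((T - (P ∘L T ∘L P + P' ∘L T ∘L P')) v) v : ℂ)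
      = inner ℂ (T x) y + inner ℂ (T y) x := by
    have h1 : (inner ℂ ((P ∘L T ∘L P) v) v : ℂ) = inner ℂ (T x) x := by
      simp only [comp_apply, ← hx]
      rw [hPinner (T x) v, ← hx]
    have h2 : (inner ℂ ((P' ∘L T ∘L P') v) v : ℂ) = inner ℂ (T y) y := by
      simp only [comp_apply, ← hy]
      rw [hP'inner (T y) v, ← hy]
    have h3 : (inner ℂ (T v) v : ℂ)
        = inner ℂ (T x) x + inner ℂ (T x) y + inner ℂ (T y) x + inner ℂ (T y) y := by
      rw [← hv]
      simp [inner_add_left, inner_add_right, map_add]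
      ring
    simp only [sub_apply, add_apply, inner_sub_left, inner_add_left, h1, h2, h3]
    ring
  set z : ℂ := inner ℂ (T x) y with hz
  have hconj : (inner ℂ (T y) x : ℂ) = starRingEnd ℂ z := by
    rw [hz, hsym' x y, inner_conj_symm]
  have hnorm : ‖(inner ℂ ((T - (P ∘L T ∘L P + P' ∘L T ∘L P')) v) v : ℂ)‖ ≤ 2 * ‖z‖ := by
    rw [key, hconj]
    calc ‖z + starRingEnd ℂ z‖ ≤ ‖z‖ + ‖starRingEnd ℂ z‖ := norm_add_le _ _
    _ = 2 * ‖z‖ := by rw [RCLike.norm_conj]; ring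
  set γ₁ : ℝ := ‖P ∘L T ∘L P‖ with hγ₁
  set γ₂ : ℝ := ‖P' ∘L T ∘L P'‖ with hγ₂
  have hbound1 : re (inner ℂ (T x) x : ℂ) ≤ γ₁ * ‖x‖ ^ 2 := by
    have e : (inner ℂ ((P ∘L T ∘L P) x) x : ℂ) = inner ℂ (T x) x := by
      simp only [comp_apply, hPx]
      rw [hPinner (T x) x, hPx]
    calc re (inner ℂ (T x) x : ℂ) = re (inner ℂ ((P ∘L T ∘L P) x) x : ℂ) := by rw [e]
    _ ≤ ‖(inner ℂ ((P ∘L T ∘L P) x) x : ℂ)‖ := RCLike.re_le_norm _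
    _ ≤ ‖(P ∘L T ∘L P) x‖ * ‖x‖ := norm_inner_le_norm _ _
    _ ≤ (γ₁ * ‖x‖) * ‖x‖ := by
        apply mul_le_mul_of_nonneg_right ((P ∘L T ∘L P).le_opNorm x) (norm_nonneg x)
    _ = γ₁ * ‖x‖ ^ 2 := by ring
  have hbound2 : re (inner ℂ (T y) y : ℂ) ≤ γ₂ * ‖y‖ ^ 2 := by
    have e : (inner ℂ ((P' ∘L T ∘L P') y) y : ℂ) = inner ℂ (T y) y := by
      simp only [comp_apply, hP'y]
      rw [hP'inner (T y) y, hP'y]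
    calc re (inner ℂ (T y) y : ℂ) = re (inner ℂ ((P' ∘L T ∘L P') y) y : ℂ) := by rw [e]
    _ ≤ ‖(inner ℂ ((P' ∘L T ∘L P') y) y : ℂ)‖ := RCLike.re_le_norm _
    _ ≤ ‖(P' ∘L T ∘L P') y‖ * ‖y‖ := norm_inner_le_norm _ _
    _ ≤ (γ₂ * ‖y‖) * ‖y‖ := by
        apply mul_le_mul_of_nonneg_right ((P' ∘L T ∘L P').le_opNorm y) (norm_nonneg y)
    _ = γ₂ * ‖y‖ ^ 2 := by ring
  have hCS : ‖z‖ ^ 2 ≤ re (inner ℂ (T x) x : ℂ) * re (inner ℂ (T y) y : ℂ) := posCS T hT x y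
  have hAnn : (0:ℝ) ≤ re (inner ℂ (T x) x : ℂ) := by simpa using hT.re_inner_nonneg_left x
  have hBnn : (0:ℝ) ≤ re (inner ℂ (T y) y : ℂ) := by simpa using hT.re_inner_nonneg_left y
  have hzsq : ‖z‖ ^ 2 ≤ (γ₁ * ‖x‖ ^ 2) * (γ₂ * ‖y‖ ^ 2) := by
    calc ‖z‖ ^ 2 ≤ re (inner ℂ (T x) x : ℂ) * re (inner ℂ (T y) y : ℂ) := hCS
    _ ≤ (γ₁ * ‖x‖ ^ 2) * (γ₂ * ‖y‖ ^ 2) := by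
        apply mul_le_mul hbound1 hbound2 hBnn
        exact le_trans hAnn hbound1
  have hxy0 : (inner ℂ x y : ℂ) = 0 := Submodule.inner_right_of_mem_orthogonal hxK hyK
  have hpyth : ‖v‖ ^ 2 = ‖x‖ ^ 2 + ‖y‖ ^ 2 := by
    rw [← hv]
    simp only [pow_two]
    exact norm_add_sq_eq_norm_sq_add_norm_sq_of_inner_eq_zero x y hxy0
  set s : ℝ := Real.sqrt (γ₁ * γ₂) with hsdef
  have hs : (0:ℝ) ≤ s := Real.sqrt_nonneg _
  have hs2 : s ^ 2 = γ₁ * γ₂ :=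
    Real.sq_sqrt (mul_nonneg (norm_nonneg _) (norm_nonneg _))
  have hzn : (0:ℝ) ≤ ‖z‖ := norm_nonneg z
  have h1 : ‖z‖ ≤ s * ‖x‖ * ‖y‖ := by
    have he : (s * ‖x‖ * ‖y‖) ^ 2 = (γ₁ * ‖x‖ ^ 2) * (γ₂ * ‖y‖ ^ 2) := by
      linear_combination (‖x‖ ^ 2 * ‖y‖ ^ 2) * hs2
    have h2 : ‖z‖ ^ 2 ≤ (s * ‖x‖ * ‖y‖) ^ 2 := by rw [he]; exact hzsq
    calc ‖z‖ = Real.sqrt (‖z‖ ^ 2) := (Real.sqrt_sq hzn).symm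
    _ ≤ Real.sqrt ((s * ‖x‖ * ‖y‖) ^ 2) := Real.sqrt_le_sqrt h2
    _ = s * ‖x‖ * ‖y‖ := Real.sqrt_sq (by positivity)
  calc ‖(inner ℂ ((T - (P ∘L T ∘L P + P' ∘L T ∘L P')) v) v : ℂ)‖ ≤ 2 * ‖z‖ := hnorm
  _ ≤ s * (‖x‖ ^ 2 + ‖y‖ ^ 2) := by nlinarith [h1, sq_nonneg (‖x‖ - ‖y‖), hs]
  _ = s * ‖v‖ ^ 2 := by rw [hpyth]
end

section
/- Let δ > 0 and define the sequence B₀ = 1, B_{j+1} = B_j + 4√(2^j δ B_j) + 2^{j+1} δ. Then there is an absolute constant C > 1 such that for every N ∈ ℕ with 2^N < 1/δ, one has ∑_{j=0}^{N-1} (B_j − 1) ≤ C √(2^N δ). -/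
lemma sqrt_pow'' (x : ℝ) (hx : 0 ≤ x) : ∀ n : ℕ, Real.sqrt (x ^ n) = Real.sqrt x ^ n
  | 0 => by simp
  | n + 1 => by
    rw [pow_succ, pow_succ, Real.sqrt_mul (pow_nonneg hx n), sqrt_pow'' x hx n]

lemma sqrt_le_of_sq' (a b : ℝ) (hb : 0 ≤ b) (h : a ≤ b ^ 2) : Real.sqrt a ≤ b := by
  calc Real.sqrt a ≤ Real.sqrt (b ^ 2) := Real.sqrt_le_sqrt h
    _ = b := Real.sqrt_sq hb

/-- Lemma 5.1 (numer): there is an absolute constant `C > 1` such that for the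
recursively defined sequence `B₀ = 1`, `B_{j+1} = B_j + 4√(2^j δ B_j) + 2^{j+1} δ`,
whenever `2^N < 1/δ` one has `∑_{j=0}^{N-1} (B_j − 1) ≤ C √(2^N δ)`. -/
theorem stmt1 : ∃ C : ℝ, 1 < C ∧ ∀ δ : ℝ, 0 < δ → ∀ B : ℕ → ℝ, B 0 = 1 →
    (∀ j : ℕ, B (j + 1) = B j + 4 * Real.sqrt (2 ^ j * δ * B j) + 2 ^ (j + 1) * δ) →
    ∀ N : ℕ, (2 : ℝ) ^ N < 1 / δ →
      ∑ j ∈ Finset.range N, (B j - 1) ≤ C * Real.sqrt (2 ^ N * δ) := by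
  refine ⟨500, by norm_num, ?_⟩
  intro δ hδ B hB0 hrec N hN
  have h2N : (2 : ℝ) ^ N * δ < 1 := by
    rw [lt_div_iff₀ hδ] at hN; linarith
  have hs2 : Real.sqrt 2 ^ 2 = 2 := Real.sq_sqrt (by norm_num)
  have hs2n : (0:ℝ) ≤ Real.sqrt 2 := Real.sqrt_nonneg 2
  have hs2lb : (1.4 : ℝ) ≤ Real.sqrt 2 := by nlinarith [sq_nonneg (Real.sqrt 2 - 1.4)]
  -- B j ≥ 1
  have hB1 : ∀ j, 1 ≤ B j := by
    intro j
    induction j with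
    | zero => rw [hB0]
    | succ j ih =>
      have h1 := Real.sqrt_nonneg ((2:ℝ) ^ j * δ * B j)
      have h2 : (0:ℝ) < 2 ^ (j + 1) * δ := by positivity
      rw [hrec j]; linarith
  -- key bound
  have key : ∀ j, (2 : ℝ) ^ j * δ ≤ 1 → B j ≤ 1 + 200 * Real.sqrt (2 ^ j * δ) := by
    intro j
    induction j with
    | zero =>
      intro _
      have := Real.sqrt_nonneg ((2:ℝ) ^ 0 * δ)
      rw [hB0]; linarith
    | succ j ih =>
      intro hle
      have hεpos : (0:ℝ) < 2 ^ j * δ := by positivity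
      have hε1 : (2 : ℝ) ^ j * δ ≤ 1 := by
        have h1 : (2:ℝ) ^ j ≤ 2 ^ (j+1) := by
          have : (1:ℝ) ≤ 2 := by norm_num
          exact pow_le_pow_right₀ this (Nat.le_succ j)
        nlinarith
      have ihh := ih hε1
      set ε : ℝ := (2:ℝ) ^ j * δ with hε
      have hsεn : (0:ℝ) ≤ Real.sqrt ε := Real.sqrt_nonneg ε
      have hsε1 : Real.sqrt ε ≤ 1 := sqrt_le_of_sq' ε 1 (by norm_num) (by nlinarith)
      have hBle : B j ≤ 201 := by nlinarith
      have hsqB : Real.sqrt (ε * B j) ≤ 15 * Real.sqrt ε := by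
        have h1 : ε * B j ≤ 225 * ε := by nlinarith [hB1 j]
        calc Real.sqrt (ε * B j) ≤ Real.sqrt (225 * ε) := Real.sqrt_le_sqrt h1
          _ = 15 * Real.sqrt ε := by
            rw [show (225:ℝ) * ε = 15 ^ 2 * ε by ring,
              Real.sqrt_mul (by positivity) ε, Real.sqrt_sq (by norm_num)]
      have hεs : ε ≤ Real.sqrt ε := by
        nlinarith [Real.sq_sqrt hεpos.le]
      have hstep : Real.sqrt ((2:ℝ) ^ (j+1) * δ) = Real.sqrt 2 * Real.sqrt ε := by
        rw [show (2:ℝ) ^ (j+1) * δ = 2 * ((2:ℝ) ^ j * δ) by ring,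
          Real.sqrt_mul (by norm_num)]
      have h262 : (262 : ℝ) ≤ 200 * Real.sqrt 2 := by nlinarith
      have h2e : (2:ℝ) ^ (j+1) * δ = 2 * ε := by rw [hε]; ring
      rw [hrec j, hstep, ← hε, h2e]
      nlinarith
  -- term bound
  have hterm : ∀ j ∈ Finset.range N, B j - 1 ≤ 200 * (Real.sqrt 2 ^ j * Real.sqrt δ) := by
    intro j hj
    have hjN : j < N := Finset.mem_range.mp hj
    have h1 : (2:ℝ) ^ j ≤ 2 ^ N := pow_le_pow_right₀ (by norm_num) hjN.le
    have h2 : (2:ℝ) ^ j * δ ≤ 1 := by nlinarith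
    have h3 := key j h2
    have h4 : Real.sqrt ((2:ℝ) ^ j * δ) = Real.sqrt 2 ^ j * Real.sqrt δ := by
      rw [Real.sqrt_mul (by positivity), sqrt_pow'' 2 (by norm_num)]
    rw [h4] at h3
    linarith
  have hgeom : ∑ j ∈ Finset.range N, Real.sqrt 2 ^ j ≤ 2.5 * Real.sqrt 2 ^ N := by
    have hne : Real.sqrt 2 ≠ 1 := by nlinarith
    rw [geom_sum_eq hne]
    rw [div_le_iff₀ (by nlinarith : (0:ℝ) < Real.sqrt 2 - 1)]
    have hN1 : (1:ℝ) ≤ Real.sqrt 2 ^ N := one_le_pow₀ (by nlinarith)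
    nlinarith
  have hsN : Real.sqrt ((2:ℝ) ^ N * δ) = Real.sqrt 2 ^ N * Real.sqrt δ := by
    rw [Real.sqrt_mul (by positivity), sqrt_pow'' 2 (by norm_num)]
  calc ∑ j ∈ Finset.range N, (B j - 1)
      ≤ ∑ j ∈ Finset.range N, 200 * (Real.sqrt 2 ^ j * Real.sqrt δ) :=
        Finset.sum_le_sum hterm
    _ = 200 * Real.sqrt δ * ∑ j ∈ Finset.range N, Real.sqrt 2 ^ j := by
        rw [Finset.mul_sum]; exact Finset.sum_congr rfl (fun j _ => by ring)
    _ ≤ 200 * Real.sqrt δ * (2.5 * Real.sqrt 2 ^ N) := by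
        have : (0:ℝ) ≤ 200 * Real.sqrt δ := by positivity
        nlinarith [Real.sqrt_nonneg δ, hgeom]
    _ = 500 * Real.sqrt ((2:ℝ) ^ N * δ) := by rw [hsN]; ring
end

section
/- Let p₁, …, pₙ be real-rooted monic real polynomials of the same degree such that every convex combination ∑ tᵢ pᵢ (with tᵢ ≥ 0, ∑ tᵢ = 1) is real-rooted. Then for any such convex combination there exist indices i₀ and j₀ with maxroot(p_{i₀}) ≤ maxroot(∑ tᵢ pᵢ) ≤ maxroot(p_{j₀}). -/
/-- A real polynomial is real-rooted if all its complex roots are real. -/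
def RealRooted (p : Polynomial ℝ) : Prop :=
  ∀ z : ℂ, (p.map (algebraMap ℝ ℂ)).IsRoot z → z.im = 0

/-- The largest real root of a real polynomial. -/
noncomputable def maxroot (p : Polynomial ℝ) : ℝ := sSup {x : ℝ | p.IsRoot x}

open Polynomial
section Aux

/-- `Nice d f`: f is a monic product of `d` real linear factors. -/
def Nice (d : ℕ) (f : Polynomial ℝ) : Prop :=
  ∃ R : Multiset ℝ, R.card = d ∧ f = (R.map fun a => X - C a).prod

lemma nice_of_realRooted {d : ℕ} {f : Polynomial ℝ} (hm : f.Monic) (hdeg : f.natDegree = d)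
    (hr : RealRooted f) : Nice d f := by
  have hmc : (f.map (algebraMap ℝ ℂ)).Monic := hm.map _
  have hsp : (f.map (algebraMap ℝ ℂ)).Splits := IsAlgClosed.splits _
  have hcard : (f.map (algebraMap ℝ ℂ)).roots.card = (f.map (algebraMap ℝ ℂ)).natDegree :=
    (splits_iff_card_roots).1 hsp
  have hprod := prod_multiset_X_sub_C_of_monic_of_roots_card_eq hmc hcard
  set Rc := (f.map (algebraMap ℝ ℂ)).roots with hRc
  refine ⟨Rc.map Complex.re, ?_, ?_⟩
  · rw [Multiset.card_map, hcard, hm.natDegree_map, hdeg]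
  · have hre : Rc.map (fun z => ((z.re : ℂ))) = Rc := by
      apply Multiset.map_congr rfl ?_ |>.trans (Multiset.map_id _)
      intro z hz
      have : z.im = 0 := hr z (isRoot_of_mem_roots hz)
      exact Complex.ext (by simp) (by simp [this])
    apply Polynomial.map_injective (algebraMap ℝ ℂ)
      (RingHom.injective (algebraMap ℝ ℂ))
    rw [← hprod, Polynomial.map_multiset_prod]
    rw [Multiset.map_map, Multiset.map_map]
    conv_rhs => rw [← hre, Multiset.map_map]
    apply congrArg
    apply Multiset.map_congr rfl
    intro z hz
    have him : z.im = 0 := hr z (isRoot_of_mem_roots hz)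
    have hz2 : (z.re : ℂ) = z := Complex.ext (by simp) (by simp [him])
    simp [Polynomial.map_sub, hz2]


namespace NiceAux

lemma monic {d f} (h : Nice d f) : f.Monic := by
  obtain ⟨R, -, rfl⟩ := h
  exact monic_multiset_prod_of_monic _ _ (fun a _ => monic_X_sub_C _)

lemma eval_eq {R : Multiset ℝ} (x : ℝ) :
    ((R.map fun a => X - C a).prod).eval x = (R.map fun a => x - a).prod := by
  rw [eval_multiset_prod, Multiset.map_map]
  congr 1
  apply Multiset.map_congr rfl
  intro a _
  simp

lemma isRoot_iff {R : Multiset ℝ} (x : ℝ) :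
    ((R.map fun a => X - C a).prod).IsRoot x ↔ x ∈ R := by
  rw [IsRoot, eval_eq, Multiset.prod_eq_zero_iff]
  constructor
  · rintro h
    obtain ⟨a, ha, he⟩ := Multiset.mem_map.1 h
    have : x = a := by linarith [sub_eq_zero.1 he]
    exact this ▸ ha
  · intro h
    exact Multiset.mem_map.2 ⟨x, h, by simp⟩

lemma rootset_finite {d f} (h : Nice d f) : {x : ℝ | f.IsRoot x}.Finite := by
  obtain ⟨R, -, rfl⟩ := h
  apply Set.Finite.subset (R.toFinset : Finset ℝ).finite_toSet
  intro x hx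
  simpa using (isRoot_iff x).1 hx

lemma rootset_nonempty {d f} (hd : 0 < d) (h : Nice d f) : {x : ℝ | f.IsRoot x}.Nonempty := by
  obtain ⟨R, hc, rfl⟩ := h
  obtain ⟨a, ha⟩ := Multiset.card_pos_iff_exists_mem.1 (by omega : 0 < Multiset.card R)
  exact ⟨a, (isRoot_iff a).2 ha⟩

lemma maxroot_isRoot {d f} (hd : 0 < d) (h : Nice d f) : f.IsRoot (maxroot f) :=
  Set.Nonempty.csSup_mem (rootset_nonempty hd h) (rootset_finite h)

lemma le_maxroot {d f} (h : Nice d f) {x : ℝ} (hx : f.IsRoot x) : x ≤ maxroot f :=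
  le_csSup (rootset_finite h).bddAbove hx

lemma root_le {d f} (h : Nice d f) {R : Multiset ℝ} (hf : f = (R.map fun a => X - C a).prod)
    {a : ℝ} (ha : a ∈ R) : a ≤ maxroot f :=
  le_maxroot h (by rw [hf]; exact (isRoot_iff a).2 ha)

lemma eval_pos_of_gt {d f} (h : Nice d f) {x : ℝ} (hx : maxroot f < x) : 0 < f.eval x := by
  obtain ⟨R, hc, rfl⟩ := h
  rw [eval_eq]
  -- all factors positive
  have : ∀ b ∈ R.map (fun a => x - a), (0:ℝ) < b := by
    intro b hb
    obtain ⟨a, ha, rfl⟩ := Multiset.mem_map.1 hb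
    have := root_le ⟨R, hc, rfl⟩ rfl ha
    linarith
  revert this
  generalize (R.map fun a => x - a) = S
  intro hS
  induction S using Multiset.induction with
  | empty => simp
  | cons a S ih =>
    rw [Multiset.prod_cons]
    exact mul_pos (hS a (Multiset.mem_cons_self _ _))
      (ih (fun b hb => hS b (Multiset.mem_cons_of_mem hb)))

lemma maxroot_le_of_eval_pos {d f} (hd : 0 < d) (h : Nice d f) {y : ℝ}
    (hy : ∀ x, y < x → 0 < f.eval x) : maxroot f ≤ y := by
  apply csSup_le (rootset_nonempty hd h)
  intro x hx
  by_contra hc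
  push_neg at hc
  exact absurd (congrArg id hx) (by simpa [Polynomial.IsRoot] using (hy x hc).ne')

end NiceAux


lemma hasse_linear_mul (a : ℝ) (g : Polynomial ℝ) (k : ℕ) :
    hasseDeriv (k+1) ((X - C a) * g) =
      (X - C a) * hasseDeriv (k+1) g + hasseDeriv k g := by
  rw [hasseDeriv_mul]
  rw [Finset.Nat.sum_antidiagonal_eq_sum_range_succ
    (f := fun i j => hasseDeriv i (X - C a) * hasseDeriv j g)]
  rw [Finset.sum_range_succ', Finset.sum_range_succ']
  have h0 : hasseDeriv 0 (X - C a) = X - C a := hasseDeriv_zero' ..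
  have h1 : hasseDeriv 1 (X - C a) = 1 := by
    rw [hasseDeriv_one']; simp
  have h2 : ∀ i, hasseDeriv (i + 2) (X - C a) = 0 := by
    intro i
    apply hasseDeriv_eq_zero_of_lt_natDegree
    rw [natDegree_X_sub_C]; omega
  rcases k with _ | k
  · simp [h0, h1]; ring
  · rw [Finset.sum_range_succ']
    simp only [h2, zero_mul, Finset.sum_const_zero, h0, h1]
    simp
    ring


lemma hasse_nonneg_of_roots_le {y : ℝ} (R : Multiset ℝ) (hR : ∀ a ∈ R, a ≤ y) (k : ℕ) :
    0 ≤ (hasseDeriv k ((R.map fun a => X - C a).prod)).eval y := by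
  induction R using Multiset.induction generalizing k with
  | empty =>
    rcases k with _ | k
    · simp
    · rw [Multiset.map_zero, Multiset.prod_zero, hasseDeriv_apply_one _ (by omega)]
      simp
  | cons a R ih =>
    have ha : a ≤ y := hR a (Multiset.mem_cons_self _ _)
    have hR' : ∀ b ∈ R, b ≤ y := fun b hb => hR b (Multiset.mem_cons_of_mem hb)
    rw [Multiset.map_cons, Multiset.prod_cons]
    rcases k with _ | k
    · rw [hasseDeriv_zero']
      simp only [eval_mul, eval_sub, eval_X, eval_C]
      have := ih hR' 0
      rw [hasseDeriv_zero'] at this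
      have hya : 0 ≤ y - a := by linarith
      positivity
    · rw [hasse_linear_mul]
      simp only [eval_add, eval_mul, eval_sub, eval_X, eval_C]
      have h1 := ih hR' (k+1)
      have h2 := ih hR' k
      have hya : 0 ≤ y - a := by linarith
      positivity


lemma eval_pos_of_hasse_nonneg {f : Polynomial ℝ} {d : ℕ} (hd : 0 < d) (hm : f.Monic)
    (hdeg : f.natDegree = d) {y : ℝ} (hh : ∀ k, 0 ≤ (hasseDeriv k f).eval y)
    {x : ℝ} (hx : y < x) : 0 < f.eval x := by
  have hT : f.eval x = (taylor y f).eval (x - y) := (taylor_eval_sub y f x).symm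
  rw [hT, eval_eq_sum_range]
  have hdT : (taylor y f).natDegree = d := by rw [natDegree_taylor, hdeg]
  have hmono : (taylor y f).Monic := by rw [taylor_apply]; exact hm.comp_X_add_C y
  have hcoeff : ∀ i, 0 ≤ (taylor y f).coeff i := by
    intro i; rw [taylor_coeff]; exact hh i
  have htop : (taylor y f).coeff d = 1 := by
    have := hmono.leadingCoeff
    rwa [leadingCoeff, hdT] at this
  rw [hdT]
  have hxy : 0 < x - y := by linarith
  calc (0:ℝ) < 1 * (x - y)^d := by positivity
    _ = (taylor y f).coeff d * (x-y)^d := by rw [htop]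
    _ ≤ ∑ i ∈ Finset.range (d+1), (taylor y f).coeff i * (x-y)^i := by
        apply Finset.single_le_sum (f := fun i => (taylor y f).coeff i * (x-y)^i)
        · intro i _
          exact mul_nonneg (hcoeff i) (by positivity)
        · simp


lemma nice_natDegree {d : ℕ} {f : Polynomial ℝ} (h : Nice d f) : f.natDegree = d := by
  obtain ⟨R, hc, rfl⟩ := h
  rw [natDegree_multiset_prod_of_monic]
  · rw [Multiset.map_map]
    have : (R.map (natDegree ∘ fun a => X - C a)) = R.map (fun _ => 1) := by
      apply Multiset.map_congr rfl
      intro a _; simp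
    rw [this, Multiset.map_const', Multiset.sum_replicate, smul_eq_mul, mul_one, hc]
  · intro g hg
    obtain ⟨a, _, rfl⟩ := Multiset.mem_map.1 hg
    exact monic_X_sub_C a

lemma affine_nonneg_at_left {c1 c2 a b : ℝ} (hab : a < b)
    (h : ∀ σ, a < σ → σ ≤ b → 0 ≤ c1 + σ * c2) : 0 ≤ c1 + a * c2 := by
  by_contra hc
  push_neg at hc
  set ε : ℝ := -(c1 + a * c2) with hε
  have hε0 : 0 < ε := by simp [hε]; linarith
  set δ : ℝ := min (b - a) (ε / (|c2| + 1)) with hδ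
  have hδ0 : 0 < δ := by
    apply lt_min (by linarith)
    positivity
  set σ := a + δ / 2 with hσ
  have h1 : a < σ := by simp [hσ]; linarith
  have h2 : σ ≤ b := by
    have : δ ≤ b - a := min_le_left _ _
    simp [hσ]; linarith
  have h3 := h σ h1 h2
  have habs : (δ/2) * c2 ≤ ε / 2 := by
    have hd2 : δ ≤ ε / (|c2| + 1) := min_le_right _ _
    have h5 : (δ/2) * c2 ≤ (δ/2) * |c2| :=
      mul_le_mul_of_nonneg_left (le_abs_self c2) (by linarith)
    have h6 : (δ/2) * |c2| ≤ (ε / (|c2|+1) / 2) * |c2| := by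
      apply mul_le_mul_of_nonneg_right (by linarith) (abs_nonneg c2)
    have h7 : (ε / (|c2|+1) / 2) * |c2| ≤ ε / 2 := by
      have hab2 : 0 ≤ |c2| := abs_nonneg c2
      rw [div_div, div_mul_eq_mul_div, div_le_div_iff₀ (by positivity) (by norm_num)]
      nlinarith
    linarith
  have : c1 + σ * c2 = (c1 + a * c2) + (δ/2) * c2 := by rw [hσ]; ring
  rw [this] at h3
  linarith

end Aux

lemma affine_nonneg_at_right {c1 c2 a b : ℝ} (hab : a < b)
    (h : ∀ σ, a ≤ σ → σ < b → 0 ≤ c1 + σ * c2) : 0 ≤ c1 + b * c2 := by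
  have key := affine_nonneg_at_left (c1 := c1 + (a+b) * c2) (c2 := -c2) hab ?_
  · linarith [key]
  · intro σ h1 h2
    have := h (a + b - σ) (by linarith) (by linarith)
    linarith

open Set in
lemma pairLemma {d : ℕ} (hd : 0 < d) (f g : Polynomial ℝ)
    (hseg : ∀ s ∈ Set.Icc (0:ℝ) 1, Nice d (C (1-s) * f + C s * g)) :
    ∀ s ∈ Set.Icc (0:ℝ) 1,
      min (maxroot f) (maxroot g) ≤ maxroot (C (1-s) * f + C s * g) := by
  set r : ℝ → Polynomial ℝ := fun s => C (1-s) * f + C s * g with hr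
  have hrseg : ∀ s ∈ Set.Icc (0:ℝ) 1, Nice d (r s) := hseg
  have hr0 : r 0 = f := by simp [hr]
  have hr1 : r 1 = g := by simp [hr]
  have hnf : Nice d f := hr0 ▸ hrseg 0 (by norm_num)
  have hng : Nice d g := hr1 ▸ hrseg 1 (by norm_num)
  intro s hs
  by_contra hlt
  push_neg at hlt
  set μ := min (maxroot f) (maxroot g) with hμ
  have hlt' : ∀ h : Polynomial ℝ, h = C (1-s) * f + C s * g → maxroot h < μ := by
    intro h hh; rw [hh]; exact hlt
  set B := max (maxroot f) (maxroot g) with hB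
  have hμB : μ ≤ B := le_trans (min_le_left _ _) (le_max_left _ _)
  have heval : ∀ σ x : ℝ, (r σ).eval x = (1-σ) * f.eval x + σ * g.eval x := by
    intro σ x; simp [hr]
  -- Hasse derivative of the pencil
  have hhform : ∀ k : ℕ, ∀ σ x : ℝ, (hasseDeriv k (r σ)).eval x
      = (1-σ) * (hasseDeriv k f).eval x + σ * (hasseDeriv k g).eval x := by
    intro k σ x
    have hCmul : ∀ (c : ℝ) (q : Polynomial ℝ),
        hasseDeriv k (C c * q) = C c * hasseDeriv k q := by
      intro c q
      rw [← smul_eq_C_mul, ← smul_eq_C_mul, map_smul]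
    rw [hr]
    simp only [map_add, hCmul]
    simp
  -- all roots of pencil members are at most B
  have hrootB : ∀ σ ∈ Icc (0:ℝ) 1, ∀ x : ℝ, (r σ).IsRoot x → x ≤ B := by
    intro σ hσ x hx
    by_contra hxB
    push_neg at hxB
    have hf : 0 < f.eval x := NiceAux.eval_pos_of_gt hnf (lt_of_le_of_lt (le_max_left _ _) hxB)
    have hg : 0 < g.eval x := NiceAux.eval_pos_of_gt hng (lt_of_le_of_lt (le_max_right _ _) hxB)
    have hpos : 0 < (r σ).eval x := by
      rw [heval]
      rcases le_total (f.eval x) (g.eval x) with hc | hc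
      · nlinarith [mul_nonneg hσ.1 (sub_nonneg.2 hc)]
      · have h1σ : 0 ≤ 1 - σ := by linarith [hσ.2]
        nlinarith [mul_nonneg h1σ (sub_nonneg.2 hc)]
    rw [IsRoot] at hx
    linarith
  -- the compactness argument: A is closed
  set T : Set (ℝ × ℝ) :=
    {z | z ∈ Icc (0:ℝ) 1 ×ˢ Icc μ B ∧ (1 - z.1) * f.eval z.2 + z.1 * g.eval z.2 = 0} with hT
  have hTcomp : IsCompact T := by
    apply IsCompact.of_isClosed_subset (IsCompact.prod isCompact_Icc isCompact_Icc)
    · apply IsClosed.inter (isClosed_Icc.prod isClosed_Icc)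
      apply isClosed_eq ?_ continuous_const
      apply Continuous.add
      · exact (Continuous.sub continuous_const continuous_fst).mul
          (Polynomial.continuous f |>.comp continuous_snd)
      · exact continuous_fst.mul (Polynomial.continuous g |>.comp continuous_snd)
    · intro z hz; exact hz.1
  set A := Prod.fst '' T with hA
  have hAclosed : IsClosed A := (hTcomp.image continuous_fst).isClosed
  have hmemA : ∀ σ ∈ Icc (0:ℝ) 1, (σ ∈ A ↔ μ ≤ maxroot (r σ)) := by
    intro σ hσ
    constructor
    · rintro ⟨z, ⟨hz1, hz3⟩, rfl⟩
      rw [Set.mem_prod] at hz1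
      have hroot : (r z.1).IsRoot z.2 := by rw [IsRoot, heval]; exact hz3
      exact le_trans hz1.2.1 (NiceAux.le_maxroot (hrseg z.1 hz1.1) hroot)
    · intro hμle
      have hroot := NiceAux.maxroot_isRoot hd (hrseg σ hσ)
      refine ⟨(σ, maxroot (r σ)), ⟨Set.mem_prod.2 ⟨hσ, hμle, hrootB σ hσ _ hroot⟩, ?_⟩, rfl⟩
      rw [IsRoot, heval] at hroot
      exact hroot
  -- left endpoint a
  set S1 := A ∩ Icc (0:ℝ) s with hS1
  have h0S1 : (0:ℝ) ∈ S1 := by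
    refine ⟨(hmemA 0 ⟨le_refl 0, by norm_num⟩).2 ?_, le_refl 0, hs.1⟩
    rw [hr0]; exact min_le_left _ _
  have hS1bdd : BddAbove S1 := BddAbove.mono (Set.inter_subset_right) bddAbove_Icc
  have hS1closed : IsClosed S1 := hAclosed.inter isClosed_Icc
  set a := sSup S1 with ha
  have haS1 : a ∈ S1 := hS1closed.csSup_mem ⟨0, h0S1⟩ hS1bdd
  have haIcc : a ∈ Icc (0:ℝ) 1 := ⟨haS1.2.1, le_trans haS1.2.2 hs.2⟩
  have ha1 : μ ≤ maxroot (r a) := (hmemA a haIcc).1 haS1.1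
  have has : a < s := lt_of_le_of_ne haS1.2.2 (fun heq => by
    rw [heq] at ha1
    exact absurd ha1 (not_le.2 (hlt' _ rfl)))
  have hbetween : ∀ σ, a < σ → σ ≤ s → maxroot (r σ) < μ := by
    intro σ h1 h2
    by_contra hcon
    push_neg at hcon
    have hmem : σ ∈ S1 := ⟨(hmemA σ ⟨le_trans haS1.2.1 h1.le, le_trans h2 hs.2⟩).2 hcon,
      le_trans haS1.2.1 h1.le, h2⟩
    exact absurd (le_csSup hS1bdd hmem) (not_le.2 h1)
  have hhassea : ∀ k, 0 ≤ (hasseDeriv k (r a)).eval μ := by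
    intro k
    set F := (hasseDeriv k f).eval μ with hF
    set G := (hasseDeriv k g).eval μ with hG
    have key : 0 ≤ F + a * (G - F) := by
      apply affine_nonneg_at_left has
      intro σ h1 h2
      have hσIcc : σ ∈ Icc (0:ℝ) 1 := ⟨le_trans haIcc.1 h1.le, le_trans h2 hs.2⟩
      obtain ⟨R, hcard, hprod⟩ := hrseg σ hσIcc
      have hRle : ∀ b ∈ R, b ≤ μ := by
        intro b hb
        exact le_trans (NiceAux.root_le ⟨R, hcard, hprod⟩ hprod hb)
          (hbetween σ h1 h2).le
      have hnn := hasse_nonneg_of_roots_le R hRle k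
      rw [← hprod, hhform] at hnn
      linarith
    have := hhform k a μ
    rw [this]
    linarith
  have hle : maxroot (r a) ≤ μ := by
    apply NiceAux.maxroot_le_of_eval_pos hd (hrseg a haIcc)
    intro x hx
    exact eval_pos_of_hasse_nonneg hd (NiceAux.monic (hrseg a haIcc))
      (nice_natDegree (hrseg a haIcc)) hhassea hx
  have hamax : maxroot (r a) = μ := le_antisymm hle ha1
  have hEa : (1-a) * f.eval μ + a * g.eval μ = 0 := by
    have hroot := NiceAux.maxroot_isRoot hd (hrseg a haIcc)
    rw [hamax, IsRoot, heval] at hroot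
    exact hroot
  -- right endpoint b
  set S2 := A ∩ Icc s 1 with hS2
  have h1S2 : (1:ℝ) ∈ S2 := by
    refine ⟨(hmemA 1 ⟨by norm_num, le_refl 1⟩).2 ?_, hs.2, le_refl 1⟩
    rw [hr1]; exact min_le_right _ _
  have hS2bdd : BddBelow S2 := BddBelow.mono (Set.inter_subset_right) bddBelow_Icc
  have hS2closed : IsClosed S2 := hAclosed.inter isClosed_Icc
  set b := sInf S2 with hb
  have hbS2 : b ∈ S2 := hS2closed.csInf_mem ⟨1, h1S2⟩ hS2bdd
  have hbIcc : b ∈ Icc (0:ℝ) 1 := ⟨le_trans hs.1 hbS2.2.1, hbS2.2.2⟩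
  have hb1 : μ ≤ maxroot (r b) := (hmemA b hbIcc).1 hbS2.1
  have hsb : s < b := lt_of_le_of_ne hbS2.2.1 (fun heq => by
    rw [← heq] at hb1
    exact absurd hb1 (not_le.2 (hlt' _ rfl)))
  have hbetween2 : ∀ σ, s ≤ σ → σ < b → maxroot (r σ) < μ := by
    intro σ h1 h2
    by_contra hcon
    push_neg at hcon
    have hmem : σ ∈ S2 := ⟨(hmemA σ ⟨le_trans hs.1 h1, le_trans h2.le hbS2.2.2⟩).2 hcon,
      h1, le_trans h2.le hbS2.2.2⟩
    exact absurd (csInf_le hS2bdd hmem) (not_le.2 h2)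
  have hhasseb : ∀ k, 0 ≤ (hasseDeriv k (r b)).eval μ := by
    intro k
    set F := (hasseDeriv k f).eval μ with hF
    set G := (hasseDeriv k g).eval μ with hG
    have key : 0 ≤ F + b * (G - F) := by
      apply affine_nonneg_at_right hsb
      intro σ h1 h2
      have hσIcc : σ ∈ Icc (0:ℝ) 1 := ⟨le_trans hs.1 h1, le_trans h2.le hbIcc.2⟩
      obtain ⟨R, hcard, hprod⟩ := hrseg σ hσIcc
      have hRle : ∀ c ∈ R, c ≤ μ := by
        intro c hc
        exact le_trans (NiceAux.root_le ⟨R, hcard, hprod⟩ hprod hc)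
          (hbetween2 σ h1 h2).le
      have hnn := hasse_nonneg_of_roots_le R hRle k
      rw [← hprod, hhform] at hnn
      linarith
    have := hhform k b μ
    rw [this]
    linarith
  have hle2 : maxroot (r b) ≤ μ := by
    apply NiceAux.maxroot_le_of_eval_pos hd (hrseg b hbIcc)
    intro x hx
    exact eval_pos_of_hasse_nonneg hd (NiceAux.monic (hrseg b hbIcc))
      (nice_natDegree (hrseg b hbIcc)) hhasseb hx
  have hbmax : maxroot (r b) = μ := le_antisymm hle2 hb1
  have hEb : (1-b) * f.eval μ + b * g.eval μ = 0 := by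
    have hroot := NiceAux.maxroot_isRoot hd (hrseg b hbIcc)
    rw [hbmax, IsRoot, heval] at hroot
    exact hroot
  -- contradiction
  have hab : a < b := lt_trans has hsb
  have hFG : f.eval μ = g.eval μ := by
    have h3 : (b - a) * (f.eval μ - g.eval μ) = 0 := by linarith [hEa, hEb]
    rcases mul_eq_zero.1 h3 with h | h
    · linarith
    · linarith
  have hF0 : f.eval μ = 0 := by
    rw [hFG] at hEa ⊢
    nlinarith [hEa]
  have hG0 : g.eval μ = 0 := hFG ▸ hF0
  have hEs : (r s).eval μ = 0 := by
    rw [heval, hF0, hG0]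
    ring
  have hpos : 0 < (r s).eval μ := NiceAux.eval_pos_of_gt (hrseg s hs) (hlt' _ rfl)
  linarith

section Main

variable {n d : ℕ} (hd : 0 < d) (p : Fin n → Polynomial ℝ)
    (hmonic : ∀ i, (p i).Monic) (hdeg : ∀ i, (p i).natDegree = d)
    (hconv : ∀ t : Fin n → ℝ, (∀ i, 0 ≤ t i) → (∑ i, t i) = 1 →
      RealRooted (∑ i, Polynomial.C (t i) * p i))

/-- convex combination -/
noncomputable def qc (t : Fin n → ℝ) : Polynomial ℝ := ∑ i, Polynomial.C (t i) * p i

include hmonic hdeg in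
lemma qc_monic (t : Fin n → ℝ) (ht1 : (∑ i, t i) = 1) :
    (qc p t).Monic ∧ (qc p t).natDegree = d := by
  have hle : (qc p t).natDegree ≤ d := by
    apply natDegree_sum_le_of_forall_le
    intro i _
    exact le_trans (natDegree_C_mul_le _ _) (le_of_eq (hdeg i))
  have hcd : (qc p t).coeff d = 1 := by
    rw [qc, finset_sum_coeff]
    have : ∀ i ∈ Finset.univ, (C (t i) * p i).coeff d = t i := by
      intro i _
      rw [coeff_C_mul]
      have : (p i).coeff d = 1 := by
        have := (hmonic i).leadingCoeff
        rwa [leadingCoeff, hdeg i] at this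
      rw [this, mul_one]
    rw [Finset.sum_congr rfl this, ht1]
  have hmo : (qc p t).Monic := monic_of_natDegree_le_of_coeff_eq_one d hle hcd
  have hge : d ≤ (qc p t).natDegree := le_natDegree_of_ne_zero (by rw [hcd]; norm_num)
  exact ⟨hmo, le_antisymm hle hge⟩

include hmonic hdeg hconv in
lemma qc_nice (t : Fin n → ℝ) (ht0 : ∀ i, 0 ≤ t i) (ht1 : (∑ i, t i) = 1) :
    Nice d (qc p t) :=
  nice_of_realRooted (qc_monic p hmonic hdeg t ht1).1 (qc_monic p hmonic hdeg t ht1).2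
    (hconv t ht0 ht1)

lemma qc_seg (t u : Fin n → ℝ) (s : ℝ) :
    C (1-s) * qc p t + C s * qc p u = qc p (fun i => (1-s) * t i + s * u i) := by
  rw [qc, qc, qc, Finset.mul_sum, Finset.mul_sum, ← Finset.sum_add_distrib]
  apply Finset.sum_congr rfl
  intro i _
  rw [← mul_assoc, ← mul_assoc, ← C_mul, ← C_mul, ← add_mul, ← C_add]

lemma qc_single (i : Fin n) :
    qc p (fun m => if m = i then (1:ℝ) else 0) = p i := by
  rw [qc]
  rw [Finset.sum_eq_single i]
  · simp
  · intro b _ hb; simp [hb]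
  · intro h; exact absurd (Finset.mem_univ i) h


theorem hardSide (hd : 0 < d) (p : Fin n → Polynomial ℝ)
    (hnice : ∀ t : Fin n → ℝ, (∀ i, 0 ≤ t i) → (∑ i, t i) = 1 → Nice d (qc p t)) :
    ∀ (k : ℕ) (t : Fin n → ℝ), (∀ i, 0 ≤ t i) → (∑ i, t i) = 1 →
      (Finset.univ.filter (fun i => 0 < t i)).card = k →
      ∃ i, maxroot (p i) ≤ maxroot (qc p t) := by
  intro k
  induction k using Nat.strong_induction_on with
  | _ k IH =>
    intro t ht0 ht1 hcard
    -- support is nonempty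
    have hne : (Finset.univ.filter (fun i => 0 < t i)).Nonempty := by
      by_contra hcon
      rw [Finset.not_nonempty_iff_eq_empty] at hcon
      have : ∀ i, t i = 0 := by
        intro i
        by_contra hti
        have : 0 < t i := lt_of_le_of_ne (ht0 i) (Ne.symm hti)
        have : i ∈ Finset.univ.filter (fun i => 0 < t i) := by
          simp [this]
        rw [hcon] at this
        exact absurd this (Finset.notMem_empty i)
      rw [Finset.sum_congr rfl (fun i _ => this i)] at ht1
      simp at ht1
    rcases Nat.lt_or_ge k 2 with hk2 | hk2
    · -- k = 1 : t is a standard basis vector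
      obtain ⟨i, hi⟩ := hne
      have hk1 : k = 1 := by
        have := Finset.card_pos.2 (⟨i, hi⟩ : (Finset.univ.filter (fun i => 0 < t i)).Nonempty)
        omega
      have hsingle : Finset.univ.filter (fun i => 0 < t i) = {i} := by
        apply Finset.eq_singleton_iff_unique_mem.2
        refine ⟨hi, ?_⟩
        intro j hj
        by_contra hji
        have h2 : 1 < (Finset.univ.filter (fun i => 0 < t i)).card := by
          apply Finset.one_lt_card.2
          exact ⟨j, hj, i, hi, hji⟩
        omega
      have hzero : ∀ j, j ≠ i → t j = 0 := by
        intro j hj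
        by_contra hcon
        have hpos : 0 < t j := lt_of_le_of_ne (ht0 j) (Ne.symm hcon)
        have : j ∈ ({i} : Finset (Fin n)) := hsingle ▸ (by simp [hpos])
        exact hj (Finset.mem_singleton.1 this)
      have hti : t i = 1 := by
        rw [Finset.sum_eq_single i (fun j _ hj => hzero j hj)
          (fun h => absurd (Finset.mem_univ i) h)] at ht1
        exact ht1
      have : qc p t = p i := by
        rw [qc, Finset.sum_eq_single i (fun j _ hj => by rw [hzero j hj]; simp)
          (fun h => absurd (Finset.mem_univ i) h), hti]
        simp
      exact ⟨i, le_of_eq (by rw [this])⟩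
    · -- k ≥ 2
      obtain ⟨i, hi⟩ := hne
      rw [Finset.mem_filter] at hi
      have hti : 0 < t i := hi.2
      obtain ⟨j, hj, i', hi', hne'⟩ := Finset.one_lt_card.1 (by omega :
        1 < (Finset.univ.filter (fun i => 0 < t i)).card)
      -- find j0 ≠ i in support
      have hexj : ∃ j0, j0 ≠ i ∧ 0 < t j0 := by
        rcases eq_or_ne j i with rfl | hji
        · exact ⟨i', Ne.symm (by simpa using hne'), (Finset.mem_filter.1 hi').2⟩
        · exact ⟨j, hji, (Finset.mem_filter.1 hj).2⟩
      obtain ⟨j0, hj0ne, hj0⟩ := hexj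
      have htilt : t i < 1 := by
        have hsum : t i + t j0 ≤ ∑ m, t m := by
          have : ({i, j0} : Finset (Fin n)) ⊆ Finset.univ := Finset.subset_univ _
          calc t i + t j0 = ∑ m ∈ ({i, j0} : Finset (Fin n)), t m := by
                rw [Finset.sum_insert (by simp [Ne.symm hj0ne]), Finset.sum_singleton]
            _ ≤ ∑ m, t m := Finset.sum_le_sum_of_subset_of_nonneg this
                (fun m _ _ => ht0 m)
        rw [ht1] at hsum
        linarith
      -- the reduced weight vector
      set t' : Fin n → ℝ := fun m => if m = i then 0 else t m / (1 - t i) with ht'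
      have h1ti : 0 < 1 - t i := by linarith
      have ht'0 : ∀ m, 0 ≤ t' m := by
        intro m
        rw [ht']
        dsimp only
        split
        · exact le_refl 0
        · exact div_nonneg (ht0 m) h1ti.le
      have ht'1 : (∑ m, t' m) = 1 := by
        have h1 : (∑ m, t' m) = ∑ m ∈ Finset.univ.erase i, t' m :=
          (Finset.sum_erase _ (by simp [ht'])).symm
        have h1b : (∑ m ∈ Finset.univ.erase i, t' m)
            = ∑ m ∈ Finset.univ.erase i, t m / (1 - t i) := by
          apply Finset.sum_congr rfl
          intro m hm
          simp [ht', Finset.ne_of_mem_erase hm]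
        rw [h1, h1b, ← Finset.sum_div]
        have h2 : ∑ m ∈ Finset.univ.erase i, t m = 1 - t i := by
          have := Finset.add_sum_erase Finset.univ t (Finset.mem_univ i)
          rw [ht1] at this
          linarith
        rw [h2]
        field_simp
      -- support of t' has smaller cardinality
      have hsupp' : Finset.univ.filter (fun m => 0 < t' m) =
          (Finset.univ.filter (fun m => 0 < t m)).erase i := by
        ext m
        rw [Finset.mem_filter, Finset.mem_erase, Finset.mem_filter]
        constructor
        · intro ⟨h1, h2⟩
          rcases eq_or_ne m i with rfl | hmi
          · rw [ht'] at h2; simp at h2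
          · refine ⟨hmi, Finset.mem_univ m, ?_⟩
            rw [ht'] at h2
            simp only [hmi, if_false] at h2
            by_contra hcon
            push_neg at hcon
            have : t m = 0 := le_antisymm hcon (ht0 m)
            rw [this] at h2
            simp at h2
        · intro ⟨h1, _, h3⟩
          refine ⟨Finset.mem_univ m, ?_⟩
          rw [ht']
          simp only [h1, if_false]
          positivity
      have hcard' : (Finset.univ.filter (fun m => 0 < t' m)).card = k - 1 := by
        rw [hsupp', Finset.card_erase_of_mem (Finset.mem_filter.2 ⟨Finset.mem_univ i, hti⟩),
          hcard]
      -- basis vector at i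
      set ei : Fin n → ℝ := fun m => if m = i then (1:ℝ) else 0 with hei
      have hei0 : ∀ m, 0 ≤ ei m := by
        intro m; rw [hei]; dsimp only; split <;> norm_num
      have hei1 : (∑ m, ei m) = 1 := by
        rw [hei, Finset.sum_ite_eq' Finset.univ i (fun _ => (1:ℝ))]
        simp
      -- the segment from (p i) to (qc p t')
      have hseg : ∀ s ∈ Set.Icc (0:ℝ) 1, Nice d (C (1-s) * p i + C s * qc p t') := by
        intro s hs
        rw [← qc_single p i, qc_seg]
        apply hnice
        · intro m
          have h1 : 0 ≤ 1 - s := by linarith [hs.2]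
          have h2 := hei0 m
          have h3 := ht'0 m
          have h4 := hs.1
          positivity
        · have hsplit : (∑ m, (((1 - s) * if m = i then (1:ℝ) else 0) + s * t' m))
              = (1-s) * (∑ m, (if m = i then (1:ℝ) else 0)) + s * (∑ m, t' m) := by
            rw [Finset.sum_add_distrib, Finset.mul_sum, Finset.mul_sum]
          rw [hsplit, Finset.sum_ite_eq' Finset.univ i (fun _ => (1:ℝ)), ht'1]
          simp
      -- key decomposition : qc p t = C (1-s0) * p i + C s0 * qc p t' at s0 = 1 - t i
      have hdecomp : C (1 - (1 - t i)) * p i + C (1 - t i) * qc p t' = qc p t := by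
        rw [← qc_single p i, qc_seg]
        rw [qc, qc]
        apply Finset.sum_congr rfl
        intro m _
        congr 1
        rcases eq_or_ne m i with rfl | hmi
        · rw [C_inj]
          simp [ht']
        · rw [C_inj]
          simp only [ht', hmi, if_false]
          field_simp
          ring
      have hmin := pairLemma hd (p i) (qc p t') hseg (1 - t i)
        ⟨by linarith, by linarith⟩
      rw [hdecomp] at hmin
      rcases le_total (maxroot (p i)) (maxroot (qc p t')) with hc | hc
      · exact ⟨i, min_eq_left hc ▸ hmin⟩
      · obtain ⟨i2, hi2⟩ := IH (k-1) (by omega) t' ht'0 ht'1 hcard'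
        exact ⟨i2, le_trans hi2 (min_eq_right hc ▸ hmin)⟩

theorem easySide (hd : 0 < d) (p : Fin n → Polynomial ℝ)
    (hnicep : ∀ i, Nice d (p i))
    (hnice : ∀ t : Fin n → ℝ, (∀ i, 0 ≤ t i) → (∑ i, t i) = 1 → Nice d (qc p t))
    (t : Fin n → ℝ) (ht0 : ∀ i, 0 ≤ t i) (ht1 : (∑ i, t i) = 1) :
    ∃ j, maxroot (qc p t) ≤ maxroot (p j) := by
  set x := maxroot (qc p t) with hx
  have hroot : (qc p t).IsRoot x := NiceAux.maxroot_isRoot hd (hnice t ht0 ht1)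
  have heval : ∑ i, t i * (p i).eval x = 0 := by
    have : (qc p t).eval x = ∑ i, t i * (p i).eval x := by
      rw [qc, eval_finset_sum]
      apply Finset.sum_congr rfl
      intro i _
      rw [eval_mul, eval_C]
    rw [IsRoot] at hroot
    rw [← this, hroot]
  have hexj : ∃ j, 0 < t j ∧ (p j).eval x ≤ 0 := by
    by_contra hcon
    push_neg at hcon
    have hpos : 0 < ∑ i, t i * (p i).eval x := by
      apply Finset.sum_pos'
      · intro i _
        rcases lt_or_eq_of_le (ht0 i) with h | h
        · exact le_of_lt (mul_pos h (hcon i h))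
        · rw [← h, zero_mul]
      · -- some index with positive weight
        have : ∃ i, 0 < t i := by
          by_contra hc2
          push_neg at hc2
          have : ∀ i, t i = 0 := fun i => le_antisymm (hc2 i) (ht0 i)
          rw [Finset.sum_congr rfl (fun i _ => this i)] at ht1
          simp at ht1
        obtain ⟨i, hi⟩ := this
        exact ⟨i, Finset.mem_univ i, mul_pos hi (hcon i hi)⟩
    rw [heval] at hpos
    exact lt_irrefl 0 hpos
  obtain ⟨j, htj, hj⟩ := hexj
  refine ⟨j, ?_⟩
  by_contra hcon
  push_neg at hcon
  have := NiceAux.eval_pos_of_gt (hnicep j) hcon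
  linarith

end Main

/-- Lemma 2.3 (ell): if `p₁,…,pₙ` are monic real-rooted polynomials of common degree `d ≥ 1`
all of whose convex combinations are real-rooted, then for any convex combination there are
indices `i₀, j₀` with `maxroot p_{i₀} ≤ maxroot (∑ tᵢ pᵢ) ≤ maxroot p_{j₀}`. -/
theorem stmt3 {n d : ℕ} (hd : 0 < d) (p : Fin n → Polynomial ℝ)
    (hmonic : ∀ i, (p i).Monic) (hdeg : ∀ i, (p i).natDegree = d)
    (hrr : ∀ i, RealRooted (p i))
    (hconv : ∀ t : Fin n → ℝ, (∀ i, 0 ≤ t i) → (∑ i, t i) = 1 →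
      RealRooted (∑ i, Polynomial.C (t i) * p i))
    (t : Fin n → ℝ) (ht0 : ∀ i, 0 ≤ t i) (ht1 : (∑ i, t i) = 1) :
    ∃ i₀ j₀ : Fin n,
      maxroot (p i₀) ≤ maxroot (∑ i, Polynomial.C (t i) * p i) ∧
      maxroot (∑ i, Polynomial.C (t i) * p i) ≤ maxroot (p j₀) := by
  have hnicep : ∀ i, Nice d (p i) := fun i => nice_of_realRooted (hmonic i) (hdeg i) (hrr i)
  have hnice : ∀ u : Fin n → ℝ, (∀ i, 0 ≤ u i) → (∑ i, u i) = 1 → Nice d (qc p u) :=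
    fun u h0 h1 => qc_nice p hmonic hdeg hconv u h0 h1
  obtain ⟨i₀, hi₀⟩ := hardSide hd p hnice _ t ht0 ht1 rfl
  obtain ⟨j₀, hj₀⟩ := easySide hd p hnicep hnice t ht0 ht1
  exact ⟨i₀, j₀, hi₀, hj₀⟩
end

section
/- Let X be a discrete metric space whose counting measure is doubling with constant C (i.e. #B(x,2r) ≤ C·#B(x,r) for all x, r). Fix r > 0 and a subset Y of X such that every point of Y lies in some set K_x with B(x,r) ⊆ K_x ⊆ B(x,2r) for points x in an r-separated net. If I ⊆ X satisfies #(I ∩ K_x) ≤ 1 for every net point x, then for every point x ∈ I, #(I ∩ B(x,r)) ≤ C⁶. -/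
/-- The counting estimate from the proof of Lemma 6.2 (metr): in a discrete metric space
whose counting measure is doubling with constant C, given an r-separated net X' with an
associated partition (K x)_{x∈X'} satisfying B(x,r) ⊆ K x ⊆ B(x,2r), any set I meeting
each K x in at most one point satisfies #(I ∩ B(x,r)) ≤ C⁶ for every x ∈ I. -/
theorem stmt16 {X : Type*} [MetricSpace X] (C : ℝ) (hC : 1 ≤ C)
    (hfin : ∀ (x : X) (ρ : ℝ), (Metric.closedBall x ρ).Finite)
    (hdouble : ∀ (x : X) (ρ : ℝ), 0 < ρ →
      ((Metric.closedBall x (2 * ρ)).ncard : ℝ) ≤ C * (Metric.closedBall x ρ).ncard)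
    (r : ℝ) (hr : 0 < r) (X' : Set X) (K : X → Set X)
    (hKlow : ∀ x ∈ X', Metric.closedBall x r ⊆ K x)
    (hKup : ∀ x ∈ X', K x ⊆ Metric.closedBall x (2 * r))
    (hKdisj : ∀ x ∈ X', ∀ y ∈ X', x ≠ y → Disjoint (K x) (K y))
    (hKcover : (⋃ x ∈ X', K x) = Set.univ)
    (hsep : ∀ x ∈ X', ∀ y ∈ X', x ≠ y →
      Disjoint (Metric.closedBall x r) (Metric.closedBall y r))
    (I : Set X) (hI : ∀ x ∈ X', (I ∩ K x).Subsingleton) :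
    ∀ x ∈ I, ((I ∩ Metric.closedBall x r).ncard : ℝ) ≤ C ^ 6 := by
  intro x hx
  classical
  have hC0 : (0:ℝ) < C := lt_of_lt_of_le one_pos hC
  set S := I ∩ Metric.closedBall x r with hS
  have hSfin : S.Finite := (hfin x r).subset Set.inter_subset_right
  have hchoice : ∀ s : X, ∃ y, y ∈ X' ∧ s ∈ K y := by
    intro s
    have : s ∈ ⋃ y ∈ X', K y := hKcover ▸ Set.mem_univ s
    simpa using this
  choose f hfX' hfK using hchoice
  set T := {y | y ∈ X' ∧ (K y ∩ S).Nonempty} with hT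
  have hTsub : T ⊆ Metric.closedBall x (3 * r) := by
    rintro y ⟨hyX, s, hsK, hsI, hsB⟩
    have h1 : s ∈ Metric.closedBall y (2*r) := hKup y hyX hsK
    simp only [Metric.mem_closedBall] at *
    have h2 := dist_triangle y s x
    rw [dist_comm y s] at h2
    linarith
  have hTfin : T.Finite := (hfin x (3*r)).subset hTsub
  have hST : S.ncard ≤ T.ncard := by
    apply Set.ncard_le_ncard_of_injOn f _ _ hTfin
    · intro s hs
      exact ⟨hfX' s, s, hfK s, hs⟩
    · intro a ha b hb hab
      exact hI (f a) (hfX' a) ⟨ha.1, hfK a⟩ ⟨hb.1, hab ▸ hfK b⟩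
  -- each y in T is within 3r of x; balls B(y,r) are disjoint, inside B(x,4r)
  set A : ℝ := ((Metric.closedBall x (4*r)).ncard : ℝ) with hA
  have hA1 : (1:ℝ) ≤ A := by
    have hxmem : x ∈ Metric.closedBall x (4*r) := Metric.mem_closedBall_self (by linarith)
    have := (Set.ncard_pos (hfin x (4*r))).2 ⟨x, hxmem⟩
    rw [hA]
    exact_mod_cast this
  have hkey : ∀ y ∈ T, A ≤ C^3 * ((Metric.closedBall y r).ncard : ℝ) := by
    intro y hy
    have hdy : dist y x ≤ 3*r := hTsub hy
    have hsub : Metric.closedBall x (4*r) ⊆ Metric.closedBall y (8*r) := by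
      intro z hz
      simp only [Metric.mem_closedBall] at *
      have := dist_triangle z x y
      rw [dist_comm y x] at hdy
      linarith
    have h0 : (A:ℝ) ≤ ((Metric.closedBall y (8*r)).ncard : ℝ) := by
      rw [hA]
      exact_mod_cast Set.ncard_le_ncard hsub (hfin y (8*r))
    have h1 := hdouble y (4*r) (by linarith)
    have h2 := hdouble y (2*r) (by linarith)
    have h3 := hdouble y r hr
    rw [show (2:ℝ)*(4*r) = 8*r by ring] at h1
    rw [show (2:ℝ)*(2*r) = 4*r by ring] at h2
    calc A ≤ ((Metric.closedBall y (8*r)).ncard : ℝ) := h0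
    _ ≤ C * ((Metric.closedBall y (4*r)).ncard : ℝ) := h1
    _ ≤ C * (C * ((Metric.closedBall y (2*r)).ncard : ℝ)) :=
        mul_le_mul_of_nonneg_left h2 (le_of_lt hC0)
    _ ≤ C * (C * (C * ((Metric.closedBall y r).ncard : ℝ))) :=
        mul_le_mul_of_nonneg_left (mul_le_mul_of_nonneg_left h3 (le_of_lt hC0)) (le_of_lt hC0)
    _ = C^3 * ((Metric.closedBall y r).ncard : ℝ) := by ring
  -- sum bound
  set Tf := hTfin.toFinset with hTf
  have hsum : ∑ y ∈ Tf, (hfin y r).toFinset.card ≤ (hfin x (4*r)).toFinset.card := by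
    rw [← Finset.card_biUnion]
    · apply Finset.card_le_card
      intro z hz
      simp only [Finset.mem_biUnion, Set.Finite.mem_toFinset] at *
      obtain ⟨y, hyT, hzy⟩ := hz
      have hdy : dist y x ≤ 3*r := hTsub (hTfin.mem_toFinset.1 hyT)
      simp only [Metric.mem_closedBall] at *
      have := dist_triangle z y x
      linarith
    · intro a ha b hb hab
      have ha' := hTfin.mem_toFinset.1 ha
      have hb' := hTfin.mem_toFinset.1 hb
      rw [Function.onFun, Set.Finite.disjoint_toFinset]
      exact hsep a ha'.1 b hb'.1 hab
  have hTA : (Tf.card : ℝ) * A ≤ C^3 * A := by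
    calc (Tf.card : ℝ) * A = ∑ _y ∈ Tf, A := by rw [Finset.sum_const, nsmul_eq_mul]
    _ ≤ ∑ y ∈ Tf, C^3 * ((Metric.closedBall y r).ncard : ℝ) := by
        apply Finset.sum_le_sum
        intro y hy
        exact hkey y (hTfin.mem_toFinset.1 hy)
    _ = C^3 * ∑ y ∈ Tf, ((Metric.closedBall y r).ncard : ℝ) := by rw [Finset.mul_sum]
    _ ≤ C^3 * A := by
        apply mul_le_mul_of_nonneg_left _ (by positivity)
        rw [hA, Set.ncard_eq_toFinset_card _ (hfin x (4*r))]
        calc ∑ y ∈ Tf, ((Metric.closedBall y r).ncard : ℝ)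
            = ((∑ y ∈ Tf, (hfin y r).toFinset.card : ℕ) : ℝ) := by
              push_cast
              exact Finset.sum_congr rfl fun y _ => by
                rw [Set.ncard_eq_toFinset_card _ (hfin y r)]
        _ ≤ _ := by exact_mod_cast hsum
  have hTle : (Tf.card : ℝ) ≤ C^3 := le_of_mul_le_mul_right hTA (by linarith)
  have hTcard : T.ncard = Tf.card := Set.ncard_eq_toFinset_card _ hTfin
  have h1 : (S.ncard : ℝ) ≤ C^3 := by
    calc (S.ncard : ℝ) ≤ (T.ncard : ℝ) := by exact_mod_cast hST
    _ = (Tf.card : ℝ) := by rw [hTcard]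
    _ ≤ C^3 := hTle
  calc ((I ∩ Metric.closedBall x r).ncard : ℝ) = (S.ncard : ℝ) := rfl
  _ ≤ C^3 := h1
  _ ≤ C^6 := pow_le_pow_right₀ (by linarith) (by norm_num)
end
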